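/- arXiv:1903.08793 — 5 statements merged into one kernel-verified Lean document; each statement's English description precedes it below -/
import Mathlib

section
/- A faithful G-extension C = ⊕_{g∈G} C_g of a fusion category D is a slightly trivial extension (every component C_g is similar to D) if and only if every component C_g contains an invertible simple object. -/
open scoped BigOperators
open Real

/-- A fusion ring: the Grothendieck-ring data of a fusion category, with basis `I`
(the isomorphism classes of simple objects), fusion multiplicities `N`, unit,
duality, and Frobenius–Perron dimensions `d`. -/
structure FusionRing (I : Type) [Fintype I] [DecidableEq I] where
  N : I → I → I → ℕ
  one : I
  dual : I → I
  d : I → ℝ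
  d_one : d one = 1
  one_le_d : ∀ i, 1 ≤ d i
  dual_dual : ∀ i, dual (dual i) = i
  d_dual : ∀ i, d (dual i) = d i
  d_mul : ∀ i j, d i * d j = ∑ k, (N i j k : ℝ) * d k
  N_one_left : ∀ i k, N one i k = if k = i then 1 else 0
  N_one_right : ∀ i k, N i one k = if k = i then 1 else 0
  N_unit : ∀ i j, N i j one = if j = dual i then 1 else 0
  assoc : ∀ i j k l, ∑ m, N i j m * N m k l = ∑ m, N j k m * N i m l

/-- A faithfully `G`-graded fusion ring: the Grothendieck data of a faithful
`G`-extension `C = ⊕_{g ∈ G} C_g` of the fusion category `D = C_e`. -/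
structure GradedFusionRing (G : Type) [Group G] [Fintype G] [DecidableEq G]
    (I : Type) [Fintype I] [DecidableEq I] extends FusionRing I where
  deg : I → G
  deg_one : deg one = 1
  deg_mul : ∀ i j k, N i j k ≠ 0 → deg k = deg i * deg j
  faithful : Function.Surjective deg

/-- The component `C_g` is *similar* to the trivial component `D = C_e`: it contains
an invertible simple object `δ` with `Irr(C_g) = {δ ⊗ X : X ∈ Irr(D)}`. -/
def SimilarComponent {G I : Type} [Group G] [Fintype G] [DecidableEq G]
    [Fintype I] [DecidableEq I] (R : GradedFusionRing G I) (g : G) : Prop :=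
  ∃ δ : I, R.deg δ = g ∧ R.d δ = 1 ∧
    ∃ φ : {i : I // R.deg i = 1} ≃ {i : I // R.deg i = g},
      ∀ X : {i : I // R.deg i = 1},
        R.N δ X.1 (φ X).1 = 1 ∧ ∀ k : I, R.N δ X.1 k ≠ 0 → k = (φ X).1


/-!
If `d δ = 1`, dimension counting forces `δ* ⊗ δ = 1`, so associativity gives
`∑ₘ N_{δ X}^m N_{δ* m}^X = N_{1 X}^X = 1`: some simple `m` occurs once in `δ ⊗ X` and `X` once in
`δ* ⊗ m`. Comparing dimensions, `d m ≤ d X ≤ d m`, so `δ ⊗ X = m` is simple. Hence `X ↦ δ ⊗ X` and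
`m ↦ δ* ⊗ m` are mutually inverse bijections between `Irr(C_e)` and `Irr(C_g)`, `g = deg δ`.
-/

namespace FusionRing
variable {I : Type} [Fintype I] [DecidableEq I] (R : FusionRing I)

lemma d_pos (i : I) : 0 < R.d i := one_pos.trans_le (R.one_le_d i)

lemma mul_d_le_sum (f : I → ℕ) (j : I) : (f j : ℝ) * R.d j ≤ ∑ k, (f k : ℝ) * R.d k :=
  Finset.single_le_sum (f := fun k => (f k : ℝ) * R.d k)
    (fun k _ => mul_nonneg (Nat.cast_nonneg _) (R.d_pos k).le) (Finset.mem_univ j)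

lemma eq_zero_of_sum_mul_d_le (f : I → ℕ) {m : I}
    (h : ∑ k, (f k : ℝ) * R.d k ≤ f m * R.d m) {k : I} (hk : k ≠ m) : f k = 0 := by
  have hpair : (f m : ℝ) * R.d m + f k * R.d k ≤ ∑ k, (f k : ℝ) * R.d k :=
    Finset.add_le_sum (fun k _ => mul_nonneg (Nat.cast_nonneg _) (R.d_pos k).le)
      (Finset.mem_univ m) (Finset.mem_univ k) hk.symm
  have hfk : (f k : ℝ) * R.d k ≤ 0 := by linarith
  exact_mod_cast le_antisymm (nonpos_of_mul_nonpos_left hfk (R.d_pos k)) (Nat.cast_nonneg (f k))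

lemma N_dual_self_of_d_eq_one {δ : I} (hδ : R.d δ = 1) (k : I) :
    R.N (R.dual δ) δ k = if k = R.one then 1 else 0 := by
  have hunit : R.N (R.dual δ) δ R.one = 1 := by simp [R.N_unit, R.dual_dual]
  split_ifs with hk
  · rw [hk, hunit]
  · refine R.eq_zero_of_sum_mul_d_le _ (m := R.one) ?_ hk
    rw [← R.d_mul, R.d_dual, hδ, hunit, R.d_one]
    norm_num

lemma sum_N_mul_N_dual_of_d_eq_one {δ : I} (hδ : R.d δ = 1) (X : I) :
    ∑ m, R.N δ X m * R.N (R.dual δ) m X = 1 := by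
  rw [← R.assoc]
  simp [R.N_dual_self_of_d_eq_one hδ, R.N_one_left]

/-- `δ ⊗ X` is a single simple object `m`, and `δ* ⊗ m` contains `X`. -/
lemma exists_N_eq_ite_of_d_eq_one {δ : I} (hδ : R.d δ = 1) (X : I) :
    ∃ m, (∀ k, R.N δ X k = if k = m then 1 else 0) ∧ R.N (R.dual δ) m X = 1 := by
  have hsum := R.sum_N_mul_N_dual_of_d_eq_one hδ X
  obtain ⟨m, -, hm⟩ : ∃ m ∈ Finset.univ, R.N δ X m * R.N (R.dual δ) m X ≠ 0 :=
    Finset.exists_ne_zero_of_sum_ne_zero (by omega)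
  have hprod : R.N δ X m * R.N (R.dual δ) m X = 1 :=
    le_antisymm (hsum ▸ Finset.single_le_sum (f := fun m => R.N δ X m * R.N (R.dual δ) m X)
      (fun _ _ => Nat.zero_le _) (Finset.mem_univ m))
      (Nat.one_le_iff_ne_zero.mpr hm)
  obtain ⟨hδX, hδ'm⟩ := mul_eq_one.mp hprod
  have hdX : R.d X = ∑ k, (R.N δ X k : ℝ) * R.d k := by rw [← R.d_mul, hδ, one_mul]
  have hdm : R.d m = ∑ k, (R.N (R.dual δ) m k : ℝ) * R.d k := by
    rw [← R.d_mul, R.d_dual, hδ, one_mul]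
  have hdim : R.d m = R.d X := le_antisymm
    (by simpa [hδX, ← hdX] using R.mul_d_le_sum (R.N δ X) m)
    (by simpa [hδ'm, ← hdm] using R.mul_d_le_sum (R.N (R.dual δ) m) X)
  refine ⟨m, fun k => ?_, hδ'm⟩
  split_ifs with hk
  · rw [hk, hδX]
  · exact R.eq_zero_of_sum_mul_d_le _ (by rw [← hdX, hδX, ← hdim]; simp) hk

end FusionRing

namespace GradedFusionRing
variable {G I : Type} [Group G] [Fintype G] [DecidableEq G] [Fintype I] [DecidableEq I]
  (R : GradedFusionRing G I)

lemma deg_dual (i : I) : R.deg (R.dual i) = (R.deg i)⁻¹ := by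
  have hunit : R.N i (R.dual i) R.one ≠ 0 := by simp [R.N_unit]
  have := R.deg_mul _ _ _ hunit
  rw [R.deg_one] at this
  exact eq_inv_of_mul_eq_one_right this.symm

lemma deg_eq_mul_of_N_eq_ite {i j m : I} (h : ∀ k, R.N i j k = if k = m then 1 else 0) :
    R.deg m = R.deg i * R.deg j :=
  R.deg_mul i j m (by simp [h])

theorem similarComponent_of_d_eq_one {δ : I} (hδ : R.d δ = 1) :
    SimilarComponent R (R.deg δ) := by
  have hδ' : R.d (R.dual δ) = 1 := by rw [R.d_dual, hδ]
  choose F hF hFX using R.exists_N_eq_ite_of_d_eq_one hδ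
  choose F' hF' hF'm using R.exists_N_eq_ite_of_d_eq_one hδ'
  simp only [R.dual_dual] at hF'm
  have hF'F : ∀ X, F' (F X) = X := fun X =>
    Eq.symm (by simpa [hF'] using hFX X)
  have hFF' : ∀ m, F (F' m) = m := fun m =>
    Eq.symm (by simpa [hF] using hF'm m)
  refine ⟨δ, rfl, hδ, ⟨fun X => ⟨F X, ?_⟩, fun m => ⟨F' m, ?_⟩,
    fun X => Subtype.ext (hF'F X), fun m => Subtype.ext (hFF' m)⟩, fun X => ?_⟩
  · rw [R.deg_eq_mul_of_N_eq_ite (hF X), X.2, mul_one]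
  · rw [R.deg_eq_mul_of_N_eq_ite (hF' m), m.2, R.deg_dual, inv_mul_cancel]
  · exact ⟨by simp [hF], fun k hk => by simpa [hF] using hk⟩

end GradedFusionRing

/-- a faithful `G`-extension `C = ⊕_g C_g` of `D` is a slightly trivial
extension (every component is similar to `D`) iff every component contains an
invertible simple object. -/
theorem stmt3 {G I : Type} [Group G] [Fintype G] [DecidableEq G]
    [Fintype I] [DecidableEq I] (R : GradedFusionRing G I) :
    (∀ g : G, SimilarComponent R g) ↔ (∀ g : G, ∃ δ : I, R.deg δ = g ∧ R.d δ = 1) := by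
  refine ⟨fun h g => ?_, fun h g => ?_⟩
  · obtain ⟨δ, hdeg, hd, -⟩ := h g
    exact ⟨δ, hdeg, hd⟩
  · obtain ⟨δ, rfl, hd⟩ := h g
    exact R.similarComponent_of_d_eq_one hd
end

section
/- Let C = ⊕_{g∈G} C_g be a slightly trivial extension of a fusion category D, and suppose the largest pointed fusion subcategory D_pt of D is trivial (equivalently, the trivial object is the only invertible simple object of D). Then every component C_g contains exactly one invertible simple object, and every simple object of C can be written uniquely as δ⊗Y with δ an invertible simple object of C and Y ∈ Irr(D); hence C = C_pt • D is an exact factorization. -/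
open scoped BigOperators
open Real

/-!
An invertible simple object `δ` of degree `g` is determined by `g`: if `δ'` is another one,
`δ* ⊗ δ'` is a sum of simple objects of degree `e` whose dimensions add up to `1`, so it is an
invertible simple object of `D`, hence the unit, and therefore `δ' ≅ δ`. Since `C_g` is similar
to `D` through this `δ`, a simple `Z ∈ C_g` is `δ ⊗ Y` for exactly one `Y ∈ Irr(D)`, and the
invertible factor of any such decomposition of `Z` has degree `g`, so it is `δ`.
-/

namespace FusionRing

variable {I : Type} [Fintype I] [DecidableEq I] (R : FusionRing I)

lemma exists_N_ne_zero (i j : I) : ∃ k, R.N i j k ≠ 0 := by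
  by_contra! h
  have := R.d_mul i j
  simp only [h, Nat.cast_zero, zero_mul, Finset.sum_const_zero] at this
  exact (mul_pos (R.d_pos i) (R.d_pos j)).ne' this

lemma d_le_mul_of_N_ne_zero {i j k : I} (h : R.N i j k ≠ 0) : R.d k ≤ R.d i * R.d j := by
  have hN : (1 : ℝ) ≤ R.N i j k := by exact_mod_cast Nat.one_le_iff_ne_zero.mpr h
  calc R.d k ≤ R.N i j k * R.d k := le_mul_of_one_le_left (R.d_pos k).le hN
    _ ≤ ∑ m, (R.N i j m : ℝ) * R.d m :=
        Finset.single_le_sum (fun m _ => mul_nonneg (Nat.cast_nonneg _) (R.d_pos m).le)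
          (Finset.mem_univ k)
    _ = R.d i * R.d j := (R.d_mul i j).symm

lemma exists_N_ne_zero_d_eq_one {i j : I} (hi : R.d i = 1) (hj : R.d j = 1) :
    ∃ k, R.N i j k ≠ 0 ∧ R.d k = 1 := by
  obtain ⟨k, hk⟩ := R.exists_N_ne_zero i j
  have hle := R.d_le_mul_of_N_ne_zero hk
  rw [hi, hj, one_mul] at hle
  exact ⟨k, hk, le_antisymm hle (R.one_le_d k)⟩

lemma N_dual_one (i : I) : R.N i (R.dual i) R.one = 1 := by
  simp [R.N_unit]

lemma eq_dual_of_N_one_ne_zero {i j : I} (h : R.N i j R.one ≠ 0) : j = R.dual i := by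
  by_contra hj
  exact h (by rw [R.N_unit, if_neg hj])

end FusionRing

namespace GradedFusionRing

variable {G I : Type} [Group G] [Fintype G] [DecidableEq G] [Fintype I] [DecidableEq I]
  (R : GradedFusionRing G I)

lemma eq_of_deg_eq_of_d_eq_one (hpt : ∀ i : I, R.deg i = 1 → R.d i = 1 → i = R.one)
    {δ δ' : I} (hdeg : R.deg δ' = R.deg δ) (hd : R.d δ = 1) (hd' : R.d δ' = 1) : δ' = δ := by
  have hdual : R.d (R.dual δ) = 1 := by rw [R.d_dual, hd]
  obtain ⟨k, hk, hdk⟩ := R.exists_N_ne_zero_d_eq_one hdual hd'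
  have hdegk : R.deg k = 1 := by
    rw [R.deg_mul _ _ _ hk, R.deg_dual, hdeg, inv_mul_cancel]
  rw [hpt k hdegk hdk] at hk
  simpa only [R.dual_dual] using R.eq_dual_of_N_one_ne_zero hk

lemma existsUnique_N_ne_zero_of_equiv {g : G} {δ : I}
    (φ : {i : I // R.deg i = 1} ≃ {i : I // R.deg i = g})
    (hφ : ∀ X : {i : I // R.deg i = 1},
      R.N δ X.1 (φ X).1 = 1 ∧ ∀ k : I, R.N δ X.1 k ≠ 0 → k = (φ X).1)
    {Z : I} (hZ : R.deg Z = g) : ∃! Y : I, R.deg Y = 1 ∧ R.N δ Y Z ≠ 0 := by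
  set X := φ.symm ⟨Z, hZ⟩
  have hφX : (φ X).1 = Z := by simp [X]
  refine ⟨X.1, ⟨X.2, by rw [← hφX, (hφ X).1]; exact one_ne_zero⟩, ?_⟩
  rintro Y ⟨hY, hN⟩
  have hφY : φ ⟨Y, hY⟩ = φ X := Subtype.ext (by rw [← (hφ ⟨Y, hY⟩).2 Z hN, hφX])
  exact congrArg Subtype.val (φ.injective hφY)

end GradedFusionRing

/-- if `C = ⊕_g C_g` is a slightly trivial extension of `D` and the
pointed part of `D` is trivial (the unit is the only invertible simple of degree
`e`), then every component contains exactly one invertible simple object, and every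
simple object of `C` is uniquely of the form `δ ⊗ Y` with `δ` invertible simple and
`Y ∈ Irr(D)`; hence `C = C_pt • D` is an exact factorization. -/
theorem stmt4 {G I : Type} [Group G] [Fintype G] [DecidableEq G]
    [Fintype I] [DecidableEq I] (R : GradedFusionRing G I)
    (hst : ∀ g : G, SimilarComponent R g)
    (hpt : ∀ i : I, R.deg i = 1 → R.d i = 1 → i = R.one) :
    (∀ g : G, ∃! δ : I, R.deg δ = g ∧ R.d δ = 1) ∧
    (∀ Z : I, ∃! p : I × I,
      R.d p.1 = 1 ∧ R.deg p.2 = 1 ∧ R.N p.1 p.2 Z ≠ 0) := by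
  refine ⟨fun g => ?_, fun Z => ?_⟩
  · obtain ⟨δ, hdeg, hd, -⟩ := hst g
    exact ⟨δ, ⟨hdeg, hd⟩, fun δ' ⟨hdeg', hd'⟩ =>
      R.eq_of_deg_eq_of_d_eq_one hpt (hdeg'.trans hdeg.symm) hd hd'⟩
  · obtain ⟨δ, hdeg, hd, φ, hφ⟩ := hst (R.deg Z)
    obtain ⟨Y, ⟨hY, hN⟩, hY_unique⟩ := R.existsUnique_N_ne_zero_of_equiv φ hφ rfl
    refine ⟨(δ, Y), ⟨hd, hY, hN⟩, ?_⟩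
    rintro ⟨a, b⟩ ⟨ha, hb, hab⟩
    have hdega : R.deg a = R.deg δ := by rw [hdeg, R.deg_mul a b Z hab, hb, mul_one]
    obtain rfl := R.eq_of_deg_eq_of_d_eq_one hpt hdega hd ha
    rw [hY_unique b ⟨hb, hab⟩]
end

section
/- In the argument of the previous lemma: if X, Y are simple with 1 < FPdim(X) < 2 and Y of minimal FP-dimension in its graded component, write X⊗Y = ⊕_{i=1}^n N^i Y_i with Y_1 = Y and FPdim(Y_1) ≤ ... ≤ FPdim(Y_n). Then N^1 = 0, all N^i ∈ {0,1}, and exactly one N^i is nonzero, so X⊗Y is simple. -/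
open scoped BigOperators
open Real

/-! `X ⊗ Y` lies in the graded component of `Y`, so each of its simple constituents has dimension
at least `FPdim Y`, while `FPdim (X ⊗ Y) = FPdim X · FPdim Y` lies strictly between `FPdim Y` and
`2 FPdim Y`. Hence the multiplicities add up to `1`, and the only constituent has dimension
`FPdim X · FPdim Y ≠ FPdim Y`, so it is not `Y`. -/

section WeightedMultiplicities

variable {ι : Type*} [Fintype ι]

theorem Fintype.exists_eq_pi_single_of_sum_eq_one [DecidableEq ι] {n : ι → ℕ}
    (h : ∑ i, n i = 1) : ∃ k, n = Pi.single k 1 := by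
  obtain ⟨k, -, hk⟩ := Finset.exists_ne_zero_of_sum_ne_zero (h.symm ▸ one_ne_zero)
  have hsplit := Finset.add_sum_erase Finset.univ n (Finset.mem_univ k)
  have hnk : n k = 1 := by omega
  have hrest : ∀ i ∈ Finset.univ.erase k, n i = 0 :=
    Finset.sum_eq_zero_iff.mp (by omega)
  refine ⟨k, funext fun i => ?_⟩
  by_cases hik : i = k
  · subst hik; simp [hnk]
  · simp [hik, hrest i (Finset.mem_erase.mpr ⟨hik, Finset.mem_univ i⟩)]

variable {R : Type*} [CommRing R] [LinearOrder R] [IsStrictOrderedRing R]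

theorem sum_natCast_mul_le_sum_natCast_mul {n : ι → ℕ} {d : ι → R} {m : R}
    (hd : ∀ k, n k ≠ 0 → m ≤ d k) :
    (∑ k, (n k : R)) * m ≤ ∑ k, (n k : R) * d k := by
  rw [Finset.sum_mul]
  refine Finset.sum_le_sum fun k _ => ?_
  rcases eq_or_ne (n k) 0 with hk | hk
  · simp [hk]
  · exact mul_le_mul_of_nonneg_left (hd k hk) (Nat.cast_nonneg _)

theorem exists_eq_pi_single_of_sum_natCast_mul_mem_Ioo [DecidableEq ι] {n : ι → ℕ} {d : ι → R}
    {m : R} (hd : ∀ k, n k ≠ 0 → m ≤ d k) (hlow : m < ∑ k, (n k : R) * d k)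
    (hhigh : ∑ k, (n k : R) * d k < 2 * m) :
    ∃ k, n = Pi.single k 1 := by
  refine Fintype.exists_eq_pi_single_of_sum_eq_one (le_antisymm ?_ ?_)
  · have hm : 0 < m := by linarith
    have hlt : ((∑ k, n k : ℕ) : R) * m < 2 * m := by
      push_cast
      exact (sum_natCast_mul_le_sum_natCast_mul hd).trans_lt hhigh
    exact Nat.lt_succ_iff.mp (by exact_mod_cast lt_of_mul_lt_mul_right hlt hm.le)
  · refine Nat.one_le_iff_ne_zero.mpr fun hzero => ?_
    have hn : ∀ k, n k = 0 := fun k => Finset.sum_eq_zero_iff.mp hzero k (Finset.mem_univ k)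
    simp only [hn, Nat.cast_zero, zero_mul, Finset.sum_const_zero] at hlow hhigh
    linarith

end WeightedMultiplicities

theorem GradedFusionRing.deg_eq_of_N_ne_zero {G I : Type} [Group G] [Fintype G] [DecidableEq G]
    [Fintype I] [DecidableEq I] (R : GradedFusionRing G I) {X Y k : I} (hX : R.deg X = 1)
    (hk : R.N X Y k ≠ 0) : R.deg k = R.deg Y := by
  rw [R.deg_mul X Y k hk, hX, one_mul]

/-- if `X, Y` are simple, `1 < FPdim X < 2`, `X` lies in the trivial
component and `Y` has minimal Frobenius–Perron dimension in its graded component,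
then in the decomposition `X ⊗ Y = ⊕ N^i Y_i` one has `N^Y = 0` (i.e. `Y` itself
does not occur), every multiplicity is `0` or `1`, and exactly one simple occurs:
`X ⊗ Y` is simple. -/
theorem stmt7 {G I : Type} [Group G] [Fintype G] [DecidableEq G]
    [Fintype I] [DecidableEq I] (R : GradedFusionRing G I)
    (X Y : I) (hXdeg : R.deg X = 1) (hX1 : 1 < R.d X) (hX2 : R.d X < 2)
    (hmin : ∀ k : I, R.deg k = R.deg Y → R.d Y ≤ R.d k) :
    R.N X Y Y = 0 ∧ (∀ k : I, R.N X Y k ≤ 1) ∧ (∃! k : I, R.N X Y k ≠ 0) := by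
  have hdY : 0 < R.d Y := zero_lt_one.trans_le (R.one_le_d Y)
  have hsum := R.d_mul X Y
  obtain ⟨k, hk⟩ := exists_eq_pi_single_of_sum_natCast_mul_mem_Ioo (m := R.d Y)
    (fun k hk => hmin k (R.deg_eq_of_N_ne_zero hXdeg hk))
    (by rw [← hsum]; nlinarith) (by rw [← hsum]; nlinarith)
  have hdk : R.d X * R.d Y = R.d k := by simpa [hk, Pi.single_apply] using hsum
  have hkY : k ≠ Y := by
    rintro rfl
    nlinarith
  refine ⟨by simp [hk, hkY.symm], fun j => ?_, ⟨k, by simp [hk], fun j => ?_⟩⟩ <;>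
    by_cases hjk : j = k <;> simp [hk, hjk]
end

section
/- With c = cos(π/7), the real number 1 + 2c + 4c² + 8c³ is not equal to 1 + 4c² + (4c²−1)², i.e., √(1+2cos(π/7))² + (2cos(π/7))²·(1+2cos(π/7)) ≠ FPdim of the rank-3 fusion ring with dimensions (1, 2c, 4c²−1). -/
open scoped BigOperators
open Real

lemma fpdim_lt_of_one_half_lt_of_le_one {x : ℝ} (hx : 1 / 2 < x) (hx' : x ≤ 1) :
    1 + 4 * x ^ 2 + (4 * x ^ 2 - 1) ^ 2 < 1 + 2 * x + 4 * x ^ 2 + 8 * x ^ 3 := by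
  have hdiff : 1 + 2 * x + 4 * x ^ 2 + 8 * x ^ 3 - (1 + 4 * x ^ 2 + (4 * x ^ 2 - 1) ^ 2)
      = 16 * x ^ 3 * (1 - x) + 8 * x ^ 2 * (1 - x) + (2 * x - 1) := by ring
  have hx₀ : 0 ≤ x := by linarith
  have h₁ : 0 ≤ 1 - x := by linarith
  have h₂ : 0 < 2 * x - 1 := by linarith
  have : 0 ≤ 16 * x ^ 3 * (1 - x) + 8 * x ^ 2 * (1 - x) := by positivity
  linarith

lemma one_half_lt_cos_pi_div_seven : 1 / 2 < Real.cos (Real.pi / 7) := by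
  rw [← Real.cos_pi_div_three]
  have hpi := Real.pi_pos
  exact Real.cos_lt_cos_of_nonneg_of_le_pi (by positivity) (by linarith) (by linarith)

/-- with `c = cos (π/7)`, the number `1 + 2c + 4c² + 8c³` (the would-be
dimension of a rank-2 component `{X, α ⊗ X}` with `X ⊗ X* = 1 ⊕ α`) differs from
`1 + 4c² + (4c² − 1)²` (the FP-dimension of the rank-3 fusion ring with dimensions
`(1, 2c, 4c² − 1)`). -/
theorem stmt9 :
    letI c : ℝ := Real.cos (Real.pi / 7)
    1 + 2 * c + 4 * c ^ 2 + 8 * c ^ 3 ≠ 1 + 4 * c ^ 2 + (4 * c ^ 2 - 1) ^ 2 :=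
  (fpdim_lt_of_one_half_lt_of_le_one one_half_lt_cos_pi_div_seven (Real.cos_le_one _)).ne'
end

section
/- Let C = ⊕_{g∈G} C_g be a faithful G-extension of a fusion category D. Then FPdim(C_g) = FPdim(C_h) for all g, h ∈ G, and FPdim(C) = |G| · FPdim(D). -/
/-
Tensoring with a simple object `j` of degree `a` maps `C_g` to `C_{ga}`. Counting the double sum
`∑_{i,k} N_{ij}^k d_i d_k` over the pairs with `i ∈ C_g` (equivalently `k ∈ C_{ga}`) in two ways,
via `d_i d_j = ∑_k N_{ij}^k d_k` and `d_j d_k = ∑_i N_{ij}^k d_i`, gives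
`d_j FPdim(C_g) = d_j FPdim(C_{ga})`. As `d_j > 0` and every `a ∈ G` is a degree, all components
have the same dimension, and `FPdim C` is their sum over `G`.
-/

open scoped BigOperators
open Real

namespace FusionRing

variable {I : Type} [Fintype I] [DecidableEq I] (R : FusionRing I)

lemma dual_bijective : Function.Bijective R.dual :=
  Function.Involutive.bijective R.dual_dual

/-- Frobenius reciprocity, read off from associativity at the unit. -/
lemma N_dual_cyclic (i j k : I) : R.N i j (R.dual k) = R.N j k (R.dual i) := by
  have h := R.assoc i j k R.one
  have hdual : ∀ m, (k = R.dual m) ↔ (m = R.dual k) := fun m => by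
    constructor <;> (rintro rfl; rw [R.dual_dual])
  simpa only [R.N_unit, hdual, mul_ite, mul_one, mul_zero, Finset.sum_ite_eq',
    Finset.mem_univ, if_true] using h

lemma sum_N_mul_d_left (j k : I) : ∑ i, (R.N i j k : ℝ) * R.d i = R.d j * R.d k := by
  have hN : ∀ i, R.N i j k = R.N j (R.dual k) (R.dual i) := fun i => by
    simpa only [R.dual_dual] using R.N_dual_cyclic i j (R.dual k)
  calc ∑ i, (R.N i j k : ℝ) * R.d i
      = ∑ i, (R.N j (R.dual k) (R.dual i) : ℝ) * R.d (R.dual i) := by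
        simp only [hN, R.d_dual]
    _ = ∑ i, (R.N j (R.dual k) i : ℝ) * R.d i :=
        Fintype.sum_bijective R.dual R.dual_bijective _ _ fun _ => rfl
    _ = R.d j * R.d k := by rw [← R.d_mul, R.d_dual]

end FusionRing

namespace GradedFusionRing

variable {G I : Type} [Group G] [Fintype G] [DecidableEq G] [Fintype I] [DecidableEq I]
  (R : GradedFusionRing G I)

noncomputable def componentDim (g : G) : ℝ :=
  ∑ i : {i : I // R.deg i = g}, R.d i.1 ^ 2

lemma componentDim_eq_sum_ite (g : G) :
    R.componentDim g = ∑ i, if R.deg i = g then R.d i ^ 2 else 0 := by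
  rw [componentDim, ← Finset.sum_filter]
  exact (Finset.sum_subtype _ (by simp) (fun i => R.d i ^ 2)).symm

lemma d_mul_componentDim_eq_sum_left (g : G) (j : I) :
    R.d j * R.componentDim g =
      ∑ i, ∑ k, if R.deg i = g then (R.N i j k : ℝ) * (R.d i * R.d k) else 0 := by
  simp only [componentDim_eq_sum_ite, Finset.mul_sum, Finset.sum_ite_irrel, Finset.sum_const_zero]
  refine Finset.sum_congr rfl fun i _ => ?_
  split_ifs
  · simp only [mul_left_comm _ (R.d i), ← Finset.mul_sum, ← R.d_mul]
    ring
  · rw [mul_zero]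

lemma d_mul_componentDim_eq_sum_right (h : G) (j : I) :
    R.d j * R.componentDim h =
      ∑ k, ∑ i, if R.deg k = h then (R.N i j k : ℝ) * (R.d i * R.d k) else 0 := by
  simp only [componentDim_eq_sum_ite, Finset.mul_sum, Finset.sum_ite_irrel, Finset.sum_const_zero]
  refine Finset.sum_congr rfl fun k _ => ?_
  split_ifs
  · simp only [← mul_assoc, ← Finset.sum_mul, R.sum_N_mul_d_left]
    ring
  · rw [mul_zero]

/-- A nonzero `N i j k` forces `deg k = deg i * deg j`, so the two gradings of the pair agree. -/
lemma ite_deg_left_eq_ite_deg_right (g : G) (i j k : I) (x : ℝ) :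
    (if R.deg i = g then (R.N i j k : ℝ) * x else 0) =
      if R.deg k = g * R.deg j then (R.N i j k : ℝ) * x else 0 := by
  by_cases hN : R.N i j k = 0
  · simp [hN]
  · simp only [R.deg_mul i j k hN, mul_left_inj]

lemma componentDim_mul_deg (g : G) (j : I) :
    R.componentDim (g * R.deg j) = R.componentDim g := by
  refine mul_left_cancel₀ (R.d_pos j).ne' ?_
  rw [d_mul_componentDim_eq_sum_right, d_mul_componentDim_eq_sum_left, Finset.sum_comm]
  simp only [R.ite_deg_left_eq_ite_deg_right]

lemma componentDim_eq (g h : G) : R.componentDim g = R.componentDim h := by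
  obtain ⟨j, hj⟩ := R.faithful (g⁻¹ * h)
  rw [← R.componentDim_mul_deg g j, hj, mul_inv_cancel_left]

lemma sum_d_sq_eq_card_mul_componentDim_one :
    ∑ i, R.d i ^ 2 = Fintype.card G * R.componentDim 1 := by
  rw [← Fintype.sum_fiberwise R.deg, ← nsmul_eq_mul, ← Finset.card_univ, ← Finset.sum_const]
  exact Finset.sum_congr rfl fun g _ => R.componentDim_eq g 1

end GradedFusionRing

/-- Etingof–Nikshych–Ostrik: for a faithful `G`-extension
`C = ⊕_g C_g` of `D`, all components have the same Frobenius–Perron dimension,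
and `FPdim C = |G| · FPdim D`. -/
theorem stmt14 {G I : Type} [Group G] [Fintype G] [DecidableEq G]
    [Fintype I] [DecidableEq I] (R : GradedFusionRing G I) :
    (∀ g h : G, ∑ i : {i : I // R.deg i = g}, R.d i.1 ^ 2 =
                ∑ i : {i : I // R.deg i = h}, R.d i.1 ^ 2) ∧
    ∑ i : I, R.d i ^ 2 =
      (Fintype.card G : ℝ) * ∑ i : {i : I // R.deg i = 1}, R.d i.1 ^ 2 :=
  ⟨R.componentDim_eq, R.sum_d_sq_eq_card_mul_componentDim_one⟩
end
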